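/- arXiv:2303.04069 — 3 statements merged into one kernel-verified Lean document; each statement's English description precedes it below -/
import Mathlib

section
/- Consider a subcritical binary Galton-Watson tree with division probability p ∈ (0,1/2) and death probability 1-p, where each leaf is independently marked with probability β ∈ (0,1). Let R be the event that exactly one leaf is marked, and let G be the generation of a leaf chosen uniformly at random. Then for every g ∈ ℕ*, P(G = g | R) = x(1-x)^{g-1}, where x = √(1-4p(1-p)(1-β)). In particular, conditionally on R, G follows a geometric distribution with parameter x. -/
set_option maxHeartbeats 1000000

open Finset

lemma my_cat_le_four_pow (n : ℕ) : (catalan n : ℝ) ≤ 4 ^ n := by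
  have h1 : catalan n ≤ Nat.centralBinom n := by
    rw [catalan_eq_centralBinom_div]; exact Nat.div_le_self _ _
  have h2 : Nat.centralBinom n ≤ 4 ^ n := by
    calc Nat.centralBinom n = (2 * n).choose n := rfl
      _ ≤ ∑ m ∈ range (2 * n + 1), (2 * n).choose m :=
          Finset.single_le_sum (f := fun m => (2 * n).choose m)
            (fun _ _ => Nat.zero_le _) (by simp; omega)
      _ = 2 ^ (2 * n) := Nat.sum_range_choose _
      _ = 4 ^ n := by rw [pow_mul]; norm_num
  calc (catalan n : ℝ) ≤ (Nat.centralBinom n : ℝ) := by exact_mod_cast h1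
    _ ≤ ((4 ^ n : ℕ) : ℝ) := by exact_mod_cast h2
    _ = 4 ^ n := by push_cast; ring

lemma my_sum_Ico_reflect (n : ℕ) (F : ℕ → ℝ) :
    ∑ k ∈ Ico 1 n, F (n - k) = ∑ k ∈ Ico 1 n, F k := by
  refine Finset.sum_nbij' (fun k => n - k) (fun k => n - k) ?_ ?_ ?_ ?_ ?_ <;>
    simp only [Finset.mem_Ico] <;> intro a ha
  · omega
  · omega
  · omega
  · omega
  · trivial

lemma my_alpha_eq_catalan (α : ℕ → ℝ) (hα0 : α 0 = 0) (hα1 : α 1 = 1)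
    (hαrec : ∀ n, 2 ≤ n → α n = ∑ i ∈ Finset.Ico 1 n, α i * α (n - i)) :
    ∀ m : ℕ, α (m + 1) = catalan m := by
  intro m
  induction m using Nat.strong_induction_on with
  | _ m ih =>
    match m with
    | 0 => simpa using hα1
    | (k + 1) =>
      rw [show k + 1 + 1 = k + 2 by ring, hαrec (k + 2) (by omega)]
      rw [Finset.sum_Ico_eq_sum_range]
      have : ∀ j ∈ range (k + 2 - 1), α (1 + j) * α (k + 2 - (1 + j)) =
          (catalan j : ℝ) * catalan (k - j) := by
        intro j hj
        simp only [Finset.mem_range] at hj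
        have h1 : α (1 + j) = catalan j := by rw [add_comm]; exact ih j (by omega)
        have h2 : k + 2 - (1 + j) = (k - j) + 1 := by omega
        have h3 : α ((k - j) + 1) = catalan (k - j) := ih (k - j) (by omega)
        rw [h1, h2, h3]
      rw [Finset.sum_congr rfl this]
      have := catalan_succ k
      rw [Fin.sum_univ_eq_sum_range (fun i => catalan i * catalan (k - i))] at this
      rw [show k + 2 - 1 = k + 1 by omega, this]
      push_cast
      rfl

lemma my_hsplit (n : ℕ) (F : ℕ → ℝ) (hn : 1 ≤ n) (h0 : F 0 = 0) (hn' : F n = 0) :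
    ∑ k ∈ range (n + 1), F k = ∑ k ∈ Ico 1 n, F k := by
  rw [Finset.sum_range_succ, hn', add_zero, Finset.range_eq_Ico,
    Finset.sum_eq_sum_Ico_succ_bot (by omega : 0 < n), h0, zero_add]

/-- Lemma 3.3 of the paper: For the subcritical binary Galton-Watson tree
with division probability `p ∈ (0,1/2)`, leaves marked independently with probability
`β ∈ (0,1)`, let `R` be the event of exactly one marked leaf and `G` the generation of a
uniformly chosen leaf.  With `u n = P(λ(T) = n)` and `v g n = P(G = g, λ(T) = n)`
(characterized by their Markov-branching recursions), the conditional probability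
`P(G = g | R) = (∑_n n(1-β)^{n-1} v g n)/(∑_n n(1-β)^{n-1} u n)` equals
`x (1-x)^{g-1}` with `x = √(1-4p(1-p)(1-β))`: conditionally on `R`, `G` is geometric
with parameter `x`. -/
theorem stmt_4 (p β : ℝ) (hp : p ∈ Set.Ioo (0 : ℝ) (1 / 2)) (hβ : β ∈ Set.Ioo (0 : ℝ) 1)
    (α : ℕ → ℝ) (hα0 : α 0 = 0) (hα1 : α 1 = 1)
    (hαrec : ∀ n, 2 ≤ n → α n = ∑ i ∈ Finset.Ico 1 n, α i * α (n - i))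
    (u : ℕ → ℝ) (hu : ∀ n, u n = α n * (1 - p) ^ n * p ^ (n - 1))
    (v : ℕ → ℕ → ℝ) (hv0 : ∀ n, v 0 n = 0) (hv0' : ∀ g, v g 0 = 0)
    (hv : ∀ g n, 1 ≤ g → 1 ≤ n →
      v g n = (if g = 1 ∧ n = 1 then 1 - p else 0) +
        (if 2 ≤ g ∧ g ≤ n then
          2 * p * ∑ i ∈ Finset.Ico 1 n, ((n - i : ℕ) : ℝ) / (n : ℝ) * v (g - 1) (n - i) * u i
        else 0))
    (x : ℝ) (hx : x = Real.sqrt (1 - 4 * p * (1 - p) * (1 - β))) :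
    ∀ g : ℕ, 1 ≤ g →
      (∑' n : ℕ, (n : ℝ) * (1 - β) ^ (n - 1) * v g n) /
        (∑' n : ℕ, (n : ℝ) * (1 - β) ^ (n - 1) * u n) = x * (1 - x) ^ (g - 1) := by
  obtain ⟨hp0, hp2⟩ := hp
  obtain ⟨hb0, hb1⟩ := hβ
  have h1p : (0:ℝ) < 1 - p := by linarith
  have h1b : (0:ℝ) < 1 - β := by linarith
  obtain ⟨t, ht_def⟩ : ∃ t : ℝ, t = p * (1 - p) * (1 - β) := ⟨_, rfl⟩
  have ht0 : (0:ℝ) < t := by rw [ht_def]; positivity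
  have ht4 : 4 * t < 1 := by
    rw [ht_def]
    nlinarith [sq_nonneg (1 - 2 * p), mul_pos (mul_pos hp0 h1p) hb0]
  have hxsq : x ^ 2 = 1 - 4 * t := by
    rw [hx, Real.sq_sqrt (by rw [ht_def] at ht4; nlinarith), ht_def]
    ring
  have hx0 : 0 < x := by
    rw [hx]
    apply Real.sqrt_pos.mpr
    rw [ht_def] at ht4
    nlinarith
  have hx1 : x < 1 := by nlinarith [sq_nonneg (x - 1)]
  -- α facts
  have hαcat : ∀ m : ℕ, α (m + 1) = catalan m := my_alpha_eq_catalan α hα0 hα1 hαrec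
  have hαnn : ∀ n, 0 ≤ α n := by
    intro n
    cases n with
    | zero => rw [hα0]
    | succ m => rw [hαcat m]; positivity
  have hαle : ∀ n, α n ≤ 4 ^ n := by
    intro n
    cases n with
    | zero => rw [hα0]; positivity
    | succ m =>
      rw [hαcat m]
      calc (catalan m : ℝ) ≤ 4 ^ m := my_cat_le_four_pow m
        _ ≤ 4 ^ (m + 1) := pow_le_pow_right₀ (by norm_num) (Nat.le_succ m)
  -- the series f and b
  obtain ⟨f, hf_def⟩ : ∃ f : ℕ → ℝ, f = fun n => α n * t ^ n := ⟨_, rfl⟩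
  obtain ⟨b, hb_def⟩ : ∃ b : ℕ → ℝ, b = fun n : ℕ => (n : ℝ) * α n * t ^ n := ⟨_, rfl⟩
  have hfnn : ∀ n, 0 ≤ f n := fun n => by
    rw [hf_def]; exact mul_nonneg (hαnn n) (by positivity)
  have hbnn : ∀ n, 0 ≤ b n := fun n => by
    rw [hb_def]
    exact mul_nonneg (mul_nonneg (Nat.cast_nonneg n) (hαnn n)) (by positivity)
  have hfz : f 0 = 0 := by simp [hf_def, hα0]
  have hbz : b 0 = 0 := by simp [hb_def]
  have h4t0 : (0:ℝ) ≤ 4 * t := by positivity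
  have hfsum : Summable f := by
    apply Summable.of_nonneg_of_le hfnn (fun n => ?_) (summable_geometric_of_lt_one h4t0 ht4)
    rw [hf_def, mul_pow]
    exact mul_le_mul_of_nonneg_right (hαle n) (by positivity)
  have hbsum : Summable b := by
    have hgeo : Summable (fun n : ℕ => (n : ℝ) ^ 1 * (4 * t) ^ n) :=
      summable_pow_mul_geometric_of_norm_lt_one 1
        (by rw [Real.norm_eq_abs, abs_of_nonneg h4t0]; exact ht4)
    apply Summable.of_nonneg_of_le hbnn (fun n => ?_) hgeo
    rw [hb_def, mul_pow, pow_one]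
    calc (n : ℝ) * α n * t ^ n = (n : ℝ) * (α n * t ^ n) := by ring
      _ ≤ (n : ℝ) * (4 ^ n * t ^ n) := by
          apply mul_le_mul_of_nonneg_left _ (Nat.cast_nonneg n)
          exact mul_le_mul_of_nonneg_right (hαle n) (by positivity)
      _ = (n : ℝ) * (4 ^ n * t ^ n) := rfl
  have hnormeq : ∀ (h : ℕ → ℝ), (∀ n, 0 ≤ h n) → (fun n => ‖h n‖) = h :=
    fun h hnn => funext fun n => Real.norm_of_nonneg (hnn n)
  have hfns : Summable (fun n => ‖f n‖) := by rw [hnormeq f hfnn]; exact hfsum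
  have hbns : Summable (fun n => ‖b n‖) := by rw [hnormeq b hbnn]; exact hbsum
  obtain ⟨A, hA_def⟩ : ∃ A : ℝ, A = ∑' n, f n := ⟨_, rfl⟩
  obtain ⟨B, hB_def⟩ : ∃ B : ℝ, B = ∑' n, b n := ⟨_, rfl⟩
  -- A * A = A - t
  have hiteSum : Summable (fun n : ℕ => if n = 1 then t else 0) :=
    summable_of_ne_finset_zero (s := {1}) (by intro n hn; simp at hn; simp [hn])
  have hinnerA : ∀ n, ∑ k ∈ range (n + 1), f k * f (n - k)
      = f n - (if n = 1 then t else 0) := by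
    intro n
    match n with
    | 0 => simp [hfz]
    | 1 => simp [Finset.sum_range_succ, hf_def, hα0, hα1]
    | (m + 2) =>
      rw [my_hsplit (m + 2) _ (by omega) (by simp [hfz]) (by simp [hfz])]
      rw [if_neg (by omega : ¬ m + 2 = 1), sub_zero]
      have hc : ∀ k ∈ Ico 1 (m + 2), f k * f (m + 2 - k)
          = t ^ (m + 2) * (α k * α (m + 2 - k)) := by
        intro k hk
        simp only [mem_Ico] at hk
        have e : t ^ k * t ^ (m + 2 - k) = t ^ (m + 2) := by
          rw [← pow_add]; congr 1; omega
        calc f k * f (m + 2 - k)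
            = α k * α (m + 2 - k) * (t ^ k * t ^ (m + 2 - k)) := by rw [hf_def]; ring
          _ = t ^ (m + 2) * (α k * α (m + 2 - k)) := by rw [e]; ring
      rw [Finset.sum_congr rfl hc, ← Finset.mul_sum, ← hαrec (m + 2) (by omega)]
      rw [hf_def]; ring
  have hAA : A * A = A - t := by
    rw [hA_def, tsum_mul_tsum_eq_tsum_sum_range_of_summable_norm hfns hfns,
      tsum_congr hinnerA, Summable.tsum_sub hfsum hiteSum, tsum_ite_eq 1 (fun _ => t)]
  -- A * B identity
  have hhalf : ∀ n, 2 ≤ n →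
      (∑ k ∈ Ico 1 n, ((n - k : ℕ) : ℝ) * (α k * α (n - k))) * 2 = (n : ℝ) * α n := by
    intro n hn
    have hrefl := my_sum_Ico_reflect n (fun j => (j : ℝ) * (α (n - j) * α j))
    have e1 : ∑ k ∈ Ico 1 n, ((n - k : ℕ) : ℝ) * (α k * α (n - k))
        = ∑ k ∈ Ico 1 n, (k : ℝ) * (α (n - k) * α k) := by
      rw [← hrefl]
      apply Finset.sum_congr rfl
      intro k hk
      simp only [mem_Ico] at hk
      rw [show n - (n - k) = k by omega]
    calc (∑ k ∈ Ico 1 n, ((n - k : ℕ) : ℝ) * (α k * α (n - k))) * 2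
        = ∑ k ∈ Ico 1 n, ((n - k : ℕ) : ℝ) * (α k * α (n - k))
          + ∑ k ∈ Ico 1 n, (k : ℝ) * (α (n - k) * α k) := by rw [← e1]; ring
      _ = ∑ k ∈ Ico 1 n, (n : ℝ) * (α k * α (n - k)) := by
          rw [← Finset.sum_add_distrib]
          apply Finset.sum_congr rfl
          intro k hk
          simp only [mem_Ico] at hk
          rw [Nat.cast_sub (by omega)]
          ring
      _ = (n : ℝ) * α n := by rw [← Finset.mul_sum, ← hαrec n hn]
  have hiteSum2 : Summable (fun n : ℕ => if n = 1 then t / 2 else 0) :=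
    summable_of_ne_finset_zero (s := {1}) (by intro n hn; simp at hn; simp [hn])
  have hinnerB : ∀ n, ∑ k ∈ range (n + 1), f k * b (n - k)
      = b n / 2 - (if n = 1 then t / 2 else 0) := by
    intro n
    match n with
    | 0 => simp [hfz, hbz]
    | 1 => simp [Finset.sum_range_succ, hf_def, hb_def, hα0, hα1]
    | (m + 2) =>
      rw [my_hsplit (m + 2) _ (by omega) (by simp [hfz]) (by simp [hbz])]
      rw [if_neg (by omega : ¬ m + 2 = 1), sub_zero]
      have hc : ∀ k ∈ Ico 1 (m + 2), f k * b (m + 2 - k)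
          = t ^ (m + 2) * (((m + 2 - k : ℕ) : ℝ) * (α k * α (m + 2 - k))) := by
        intro k hk
        simp only [mem_Ico] at hk
        have e : t ^ k * t ^ (m + 2 - k) = t ^ (m + 2) := by
          rw [← pow_add]; congr 1; omega
        calc f k * b (m + 2 - k)
            = ((m + 2 - k : ℕ) : ℝ) * (α k * α (m + 2 - k)) * (t ^ k * t ^ (m + 2 - k)) := by
              rw [hf_def, hb_def]; ring
          _ = _ := by rw [e]; ring
      rw [Finset.sum_congr rfl hc, ← Finset.mul_sum]
      have h2 := hhalf (m + 2) (by omega)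
      rw [hb_def]
      show t ^ (m + 2) * (∑ k ∈ Ico 1 (m + 2), ((m + 2 - k : ℕ) : ℝ) * (α k * α (m + 2 - k)))
        = ((m + 2 : ℕ) : ℝ) * α (m + 2) * t ^ (m + 2) / 2
      rw [← h2]
      push_cast
      ring
  have hAB2 : 2 * (A * B) = B - t := by
    have h1 : A * B = B / 2 - t / 2 := by
      rw [hA_def, hB_def, tsum_mul_tsum_eq_tsum_sum_range_of_summable_norm hfns hbns,
        tsum_congr hinnerB, Summable.tsum_sub (hbsum.div_const 2) hiteSum2, tsum_ite_eq 1 (fun _ => t / 2),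
        tsum_div_const]
    linarith
  have hb1t : b 1 = t := by simp [hb_def, hα1]
  have hBpos : 0 < B := by
    rw [hB_def]
    exact Summable.tsum_pos hbsum hbnn 1 (by rw [hb1t]; exact ht0)
  have hprod : (1 - 2 * A) * B = t := by linarith
  have h12A : 0 < 1 - 2 * A := by
    rcases le_or_gt (1 - 2 * A) 0 with h | h
    · exfalso
      nlinarith [mul_nonpos_of_nonpos_of_nonneg h hBpos.le]
    · exact h
  have h2Ax : 1 - 2 * A = x := by
    have hsq : (1 - 2 * A) ^ 2 = x ^ 2 := by linear_combination 4 * hAA - hxsq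
    have hz : (1 - 2 * A - x) * (1 - 2 * A + x) = 0 := by linear_combination hsq
    rcases mul_eq_zero.mp hz with h | h
    · linarith
    · linarith
  have hBval : x * B = t := by rw [← h2Ax]; exact hprod
  -- the denominator
  have hDterm : ∀ n : ℕ, (n : ℝ) * (1 - β) ^ (n - 1) * u n = (1 - p) / t * b n := by
    intro n
    match n with
    | 0 => simp [hbz, hu 0, hα0]
    | (m + 1) =>
      rw [hu (m + 1), hb_def]
      simp only [Nat.add_sub_cancel]
      have e : t ^ (m + 1) = t * t ^ m := by rw [pow_succ]; ring
      rw [e]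
      have ht' : t ≠ 0 := ne_of_gt ht0
      field_simp
      rw [ht_def]
      rw [show (p * (1 - p) * (1 - β)) ^ m = p ^ m * (1 - p) ^ m * (1 - β) ^ m by
        rw [mul_pow, mul_pow]]
      ring
  have hD : (∑' n : ℕ, (n : ℝ) * (1 - β) ^ (n - 1) * u n) = (1 - p) / t * B := by
    rw [tsum_congr hDterm, tsum_mul_left, ← hB_def]
  have hDval : (∑' n : ℕ, (n : ℝ) * (1 - β) ^ (n - 1) * u n) = (1 - p) / x := by
    rw [hD, show B = t / x by field_simp; linarith [hBval]]
    field_simp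
  -- facts about u
  have hu0 : u 0 = 0 := by simp [hu 0, hα0]
  have hu1 : u 1 = 1 - p := by simp [hu 1, hα1]
  have hunn : ∀ n, 0 ≤ u n := fun n => by
    rw [hu n]
    have := hαnn n
    positivity
  have hukey : ∀ n, 2 ≤ n → ∑ i ∈ Ico 1 n, u (n - i) * u i = u n / p := by
    intro n hn
    have hc : ∀ i ∈ Ico 1 n, u (n - i) * u i
        = α i * α (n - i) * ((1 - p) ^ n * p ^ (n - 2)) := by
      intro i hi
      simp only [mem_Ico] at hi
      rw [hu (n - i), hu i]
      have e1 : (1 - p) ^ (n - i) * (1 - p) ^ i = (1 - p) ^ n := by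
        rw [← pow_add]; congr 1; omega
      have e2 : p ^ (n - i - 1) * p ^ (i - 1) = p ^ (n - 2) := by
        rw [← pow_add]; congr 1; omega
      calc α (n - i) * (1 - p) ^ (n - i) * p ^ (n - i - 1) * (α i * (1 - p) ^ i * p ^ (i - 1))
          = α i * α (n - i) * (((1 - p) ^ (n - i) * (1 - p) ^ i)
            * (p ^ (n - i - 1) * p ^ (i - 1))) := by ring
        _ = _ := by rw [e1, e2]
    rw [Finset.sum_congr rfl hc, ← Finset.sum_mul, ← hαrec n hn, hu n]
    have e3 : p ^ (n - 1) = p * p ^ (n - 2) := by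
      rw [← pow_succ']; congr 1; omega
    rw [e3]
    field_simp
  -- facts about v
  have hvlt : ∀ g n, n < g → v g n = 0 := by
    intro g
    induction g with
    | zero => intro n h; omega
    | succ g ih =>
      intro n hn
      rcases Nat.eq_zero_or_pos n with h0 | h1
      · rw [h0]; exact hv0' _
      · rw [hv (g + 1) n (by omega) h1, if_neg (by omega), if_neg (by omega), add_zero]
  have hv1 : ∀ n, v 1 n = if n = 1 then 1 - p else 0 := by
    intro n
    rcases Nat.eq_zero_or_pos n with h0 | h1
    · rw [h0, hv0' 1]; simp
    · rw [hv 1 n le_rfl h1, if_neg (by omega : ¬(2 ≤ 1 ∧ 1 ≤ n)), add_zero]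
      by_cases h : n = 1 <;> simp [h]
  have hv2 : ∀ g n, 2 ≤ g → 1 ≤ n →
      v g n = 2 * p * ∑ i ∈ Ico 1 n, ((n - i : ℕ) : ℝ) / (n : ℝ) * v (g - 1) (n - i) * u i := by
    intro g n hg hn
    rcases le_or_gt g n with h | h
    · rw [hv g n (by omega) hn, if_neg (by omega), if_pos ⟨hg, h⟩, zero_add]
    · rw [hvlt g n h]
      have hz : ∀ i ∈ Ico 1 n, ((n - i : ℕ) : ℝ) / (n : ℝ) * v (g - 1) (n - i) * u i = 0 := by
        intro i hi
        simp only [mem_Ico] at hi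
        rw [hvlt (g - 1) (n - i) (by omega)]
        ring
      rw [Finset.sum_congr rfl hz, Finset.sum_const_zero, mul_zero]
  have hvnn : ∀ g n, 0 ≤ v g n := by
    intro g
    induction g with
    | zero => intro n; rw [hv0 n]
    | succ g ih =>
      intro n
      rcases Nat.eq_zero_or_pos n with h0 | h1
      · rw [h0, hv0']
      · rcases Nat.eq_zero_or_pos g with hg0 | hg1
        · subst hg0
          rw [hv1 n]
          by_cases h : n = 1 <;> simp [h] <;> linarith
        · rw [hv2 (g + 1) n (by omega) h1]
          simp only [Nat.add_sub_cancel]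
          apply mul_nonneg (by positivity)
          apply Finset.sum_nonneg
          intro i hi
          exact mul_nonneg (mul_nonneg (by positivity) (ih _)) (hunn i)
  have hvle : ∀ g n, v g n ≤ 2 ^ g * u n := by
    intro g
    induction g with
    | zero => intro n; rw [hv0 n, pow_zero, one_mul]; exact hunn n
    | succ g ih =>
      intro n
      rcases Nat.eq_zero_or_pos n with h0 | h1
      · rw [h0, hv0', hu0, mul_zero]
      · rcases Nat.eq_zero_or_pos g with hg0 | hg1
        · subst hg0
          rw [hv1 n]
          by_cases h : n = 1
          · subst h
            rw [hu1, if_pos rfl]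
            norm_num
            linarith
          · rw [if_neg h]
            have := hunn n
            positivity
        · rw [hv2 (g + 1) n (by omega) h1]
          simp only [Nat.add_sub_cancel]
          rcases Nat.lt_or_ge n 2 with h2 | h2
          · have hn1 : n = 1 := by omega
            subst hn1
            rw [show Ico 1 1 = (∅ : Finset ℕ) from rfl, Finset.sum_empty, mul_zero, hu1]
            positivity
          · have step1 : ∑ i ∈ Ico 1 n, ((n - i : ℕ) : ℝ) / (n : ℝ) * v g (n - i) * u i
                ≤ ∑ i ∈ Ico 1 n, 2 ^ g * u (n - i) * u i := by
              apply Finset.sum_le_sum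
              intro i hi
              simp only [mem_Ico] at hi
              have hdiv : ((n - i : ℕ) : ℝ) / (n : ℝ) ≤ 1 := by
                apply div_le_one_of_le₀ _ (Nat.cast_nonneg n)
                exact_mod_cast Nat.sub_le n i
              have hstep : ((n - i : ℕ) : ℝ) / (n : ℝ) * v g (n - i) ≤ 1 * (2 ^ g * u (n - i)) :=
                mul_le_mul hdiv (ih _) (hvnn _ _) one_pos.le
              calc ((n - i : ℕ) : ℝ) / (n : ℝ) * v g (n - i) * u i
                  ≤ 1 * (2 ^ g * u (n - i)) * u i := mul_le_mul_of_nonneg_right hstep (hunn i)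
                _ = 2 ^ g * u (n - i) * u i := by ring
            have step2 : ∑ i ∈ Ico 1 n, (2:ℝ) ^ g * u (n - i) * u i = 2 ^ g * (u n / p) := by
              rw [show ∑ i ∈ Ico 1 n, (2:ℝ)^g * u (n-i) * u i
                  = ∑ i ∈ Ico 1 n, (2:ℝ)^g * (u (n-i) * u i) from by
                    apply Finset.sum_congr rfl; intros; ring]
              rw [← Finset.mul_sum, hukey n h2]
            calc 2 * p * ∑ i ∈ Ico 1 n, ((n - i : ℕ) : ℝ) / (n : ℝ) * v g (n - i) * u i
                ≤ 2 * p * ∑ i ∈ Ico 1 n, 2 ^ g * u (n - i) * u i := by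
                  apply mul_le_mul_of_nonneg_left step1 (by positivity)
              _ = 2 * p * (2 ^ g * (u n / p)) := by rw [step2]
              _ = 2 ^ (g + 1) * u n := by field_simp; ring
  -- summability of the numerator series
  have hwsum : ∀ g, Summable (fun n : ℕ => (n : ℝ) * (1 - β) ^ (n - 1) * v g n) := by
    intro g
    apply Summable.of_nonneg_of_le (fun n => ?_) (fun n => ?_)
      (((hbsum.mul_left ((1 - p) / t)).mul_left ((2:ℝ) ^ g)))
    · have h1 := hvnn g n
      have h2 : (0:ℝ) ≤ (1 - β) ^ (n - 1) := by positivity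
      positivity
    · calc (n : ℝ) * (1 - β) ^ (n - 1) * v g n
          ≤ (n : ℝ) * (1 - β) ^ (n - 1) * (2 ^ g * u n) := by
            apply mul_le_mul_of_nonneg_left (hvle g n)
            positivity
        _ = 2 ^ g * ((n : ℝ) * (1 - β) ^ (n - 1) * u n) := by ring
        _ = 2 ^ g * ((1 - p) / t * b n) := by rw [hDterm n]
  -- N 1 = 1 - p
  have hN1 : (∑' n : ℕ, (n : ℝ) * (1 - β) ^ (n - 1) * v 1 n) = 1 - p := by
    rw [tsum_eq_single 1 ?_]
    · simp [hv1 1]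
    · intro n hn
      rw [hv1 n, if_neg hn, mul_zero]
  -- the series f1
  obtain ⟨f1, hf1_def⟩ : ∃ f1 : ℕ → ℝ, f1 = fun i : ℕ => (1 - β) ^ i * u i := ⟨_, rfl⟩
  have hf1z : f1 0 = 0 := by simp [hf1_def, hu0]
  have hf1nn : ∀ i, 0 ≤ f1 i := fun i => by
    rw [hf1_def]
    exact mul_nonneg (by positivity) (hunn i)
  have hf1eq : ∀ i, f1 i = f i * p⁻¹ := by
    intro i
    match i with
    | 0 => rw [hf1z, hfz, zero_mul]
    | (m + 1) =>
      simp only [hf1_def, hf_def]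
      rw [hu (m + 1)]
      simp only [Nat.add_sub_cancel]
      have e : t ^ (m + 1) = t * t ^ m := by rw [pow_succ]; ring
      rw [e, ht_def,
        show (p * (1 - p) * (1 - β)) ^ m = p ^ m * (1 - p) ^ m * (1 - β) ^ m by
          rw [mul_pow, mul_pow]]
      field_simp
      ring
  have hf1sum : Summable f1 := by
    rw [show f1 = fun i => f i * p⁻¹ from funext hf1eq]
    exact hfsum.mul_right _
  have hf1ns : Summable (fun n => ‖f1 n‖) := by rw [hnormeq f1 hf1nn]; exact hf1sum
  have hf1tsum : (∑' i, f1 i) = A * p⁻¹ := by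
    rw [tsum_congr hf1eq, tsum_mul_right, ← hA_def]
  -- recursion for the numerator
  have hNrec : ∀ g, 2 ≤ g → (∑' n : ℕ, (n : ℝ) * (1 - β) ^ (n - 1) * v g n)
      = (1 - x) * (∑' n : ℕ, (n : ℝ) * (1 - β) ^ (n - 1) * v (g - 1) n) := by
    intro g hg
    obtain ⟨w, hw_def⟩ : ∃ w : ℕ → ℝ,
      w = fun m : ℕ => (m : ℝ) * (1 - β) ^ (m - 1) * v (g - 1) m := ⟨_, rfl⟩
    have hwz : w 0 = 0 := by simp [hw_def]
    have hwnn : ∀ m, 0 ≤ w m := fun m => by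
      rw [hw_def]
      have := hvnn (g - 1) m
      have h2 : (0:ℝ) ≤ (1 - β) ^ (m - 1) := by positivity
      positivity
    have hwsum' : Summable w := by rw [hw_def]; exact hwsum (g - 1)
    have hwns : Summable (fun m => ‖w m‖) := by rw [hnormeq w hwnn]; exact hwsum'
    have hterm : ∀ n : ℕ, (n : ℝ) * (1 - β) ^ (n - 1) * v g n
        = 2 * p * ∑ k ∈ range (n + 1), w k * f1 (n - k) := by
      intro n
      match n with
      | 0 => simp [hv0' g, hwz]
      | (m + 1) =>
        rw [hv2 g (m + 1) hg (by omega)]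
        have hterm1 : ∀ i ∈ Ico 1 (m + 1),
            ((m + 1 : ℕ) : ℝ) * (1 - β) ^ m
              * (((m + 1 - i : ℕ) : ℝ) / ((m + 1 : ℕ) : ℝ) * v (g - 1) (m + 1 - i) * u i)
            = w (m + 1 - i) * f1 i := by
          intro i hi
          simp only [mem_Ico] at hi
          rw [hw_def, hf1_def]
          simp only
          have hm1 : ((m + 1 : ℕ) : ℝ) ≠ 0 := Nat.cast_ne_zero.mpr (by omega)
          have e1 : m + 1 - i - 1 = m - i := by omega
          have e2 : (1 - β) ^ (m - i) * (1 - β) ^ i = (1 - β) ^ m := by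
            rw [← pow_add]; congr 1; omega
          rw [e1, ← e2]
          field_simp
        calc ((m + 1 : ℕ) : ℝ) * (1 - β) ^ (m + 1 - 1)
              * (2 * p * ∑ i ∈ Ico 1 (m + 1),
                ((m + 1 - i : ℕ) : ℝ) / ((m + 1 : ℕ) : ℝ) * v (g - 1) (m + 1 - i) * u i)
            = 2 * p * ∑ i ∈ Ico 1 (m + 1), ((m + 1 : ℕ) : ℝ) * (1 - β) ^ m
              * (((m + 1 - i : ℕ) : ℝ) / ((m + 1 : ℕ) : ℝ) * v (g - 1) (m + 1 - i) * u i) := by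
              rw [Nat.add_sub_cancel, Finset.mul_sum, Finset.mul_sum]
              rw [Finset.mul_sum]
              apply Finset.sum_congr rfl
              intros
              ring
          _ = 2 * p * ∑ i ∈ Ico 1 (m + 1), w (m + 1 - i) * f1 i := by
              rw [Finset.sum_congr rfl hterm1]
          _ = 2 * p * ∑ i ∈ Ico 1 (m + 1), (fun j => w j * f1 (m + 1 - j)) (m + 1 - i) := by
              congr 1
              apply Finset.sum_congr rfl
              intro i hi
              simp only [mem_Ico] at hi
              simp only
              rw [show m + 1 - (m + 1 - i) = i by omega]
          _ = 2 * p * ∑ k ∈ Ico 1 (m + 1), w k * f1 (m + 1 - k) := by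
              rw [my_sum_Ico_reflect (m + 1) (fun j => w j * f1 (m + 1 - j))]
          _ = 2 * p * ∑ k ∈ range (m + 2), w k * f1 (m + 1 - k) := by
              rw [my_hsplit (m + 1) _ (by omega) (by simp [hwz]) (by simp [hf1z])]
    calc (∑' n : ℕ, (n : ℝ) * (1 - β) ^ (n - 1) * v g n)
        = ∑' n : ℕ, 2 * p * ∑ k ∈ range (n + 1), w k * f1 (n - k) := tsum_congr hterm
      _ = 2 * p * ∑' n : ℕ, ∑ k ∈ range (n + 1), w k * f1 (n - k) := tsum_mul_left
      _ = 2 * p * ((∑' m, w m) * (∑' i, f1 i)) := by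
          rw [tsum_mul_tsum_eq_tsum_sum_range_of_summable_norm hwns hf1ns]
      _ = 2 * p * ((∑' m, w m) * (A * p⁻¹)) := by rw [hf1tsum]
      _ = (2 * A) * (∑' m, w m) := by
          field_simp
      _ = (1 - x) * (∑' n : ℕ, (n : ℝ) * (1 - β) ^ (n - 1) * v (g - 1) n) := by
          rw [show 2 * A = 1 - x by linarith [h2Ax], hw_def]
  -- closed form of the numerator
  have hNval : ∀ g : ℕ, 1 ≤ g →
      (∑' n : ℕ, (n : ℝ) * (1 - β) ^ (n - 1) * v g n) = (1 - p) * (1 - x) ^ (g - 1) := by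
    intro g
    induction g with
    | zero => omega
    | succ g ih =>
      intro _
      rcases Nat.eq_zero_or_pos g with h0 | h1
      · subst h0
        simpa using hN1
      · rw [hNrec (g + 1) (by omega)]
        simp only [Nat.add_sub_cancel]
        rw [ih h1]
        have e : g - 1 + 1 = g := by omega
        calc (1 - x) * ((1 - p) * (1 - x) ^ (g - 1))
            = (1 - p) * ((1 - x) ^ (g - 1) * (1 - x)) := by ring
          _ = (1 - p) * (1 - x) ^ (g - 1 + 1) := by rw [pow_succ]
          _ = (1 - p) * (1 - x) ^ g := by rw [e]
  -- conclusion
  intro g hg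
  rw [hNval g hg, hDval]
  rw [div_div_eq_mul_div, div_eq_iff (by positivity : (1:ℝ) - p ≠ 0)]
  ring
end

section
/- For a supercritical birth-death process with birth rate b_1 > d_1 ≥ 0, λ_1 = b_1-d_1, starting from one individual, with probabilities P(Z(a)=i) = (λ_1^2 e^{-λ_1 a}/b_1^2)·(1-e^{-λ_1 a})^{i-1}/(1-(d_1/b_1)e^{-λ_1 a})^{i+1}: the expected site frequency spectrum at time t with per-division mean mutation count ω (ω/2 per daughter) satisfies E[S_i(t)] = ∫_0^t ω e^{λ_1(t-a)} b_1 P(Z(a)=i) da = ω e^{λ_1 t} ∫_0^{y*(t)} (1-y)/(1-(d_1/b_1)y) · y^{i-1} dy, where y*(t) = (e^{λ_1 t}-1)/(e^{λ_1 t}-d_1/b_1). -/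
open Real Set intervalIntegral

private lemma aux1 (r E : ℝ) (h : 1 - r * E ≠ 0) :
    1 - (1 - E) / (1 - r * E) = (1 - r) * E / (1 - r * E) := by
  rw [eq_div_iff h, sub_mul, div_mul_cancel₀ _ h]
  ring

private lemma aux2 (r E : ℝ) (h : 1 - r * E ≠ 0) :
    1 - r * ((1 - E) / (1 - r * E)) = (1 - r) / (1 - r * E) := by
  field_simp
  ring

private lemma aux3 (r E D : ℝ) (hr : 1 - r ≠ 0) (hD : D ≠ 0) :
    (1 - r) * E / D / ((1 - r) / D) = E := by
  field_simp

private lemma auxfin (j : ℕ) (om K b d lam E D : ℝ) (hb : b ≠ 0) (hD : D ≠ 0)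
    (hlam : lam = b - d) :
    om * (K * E) * b * (lam ^ 2 * E / b ^ 2 * (1 - E) ^ j / D ^ (j + 1 + 1)) =
      om * K * (lam * (1 - d / b) * E / D ^ 2 * (E * ((1 - E) ^ j / D ^ j))) := by
  subst hlam
  field_simp
  ring

/-- Lemma A.2: For a supercritical birth-death process (`b_1 > d_1 ≥ 0`,
`λ_1 = b_1 - d_1`) started from one individual, with
`P(Z(a)=i) = (λ_1^2 e^{-λ_1 a}/b_1^2)(1-e^{-λ_1 a})^{i-1}/(1-(d_1/b_1)e^{-λ_1 a})^{i+1}`,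
the expected SFS satisfies
`E[S_i(t)] = ∫_0^t ω e^{λ_1(t-a)} b_1 P(Z(a)=i) da
 = ω e^{λ_1 t} ∫_0^{y*(t)} (1-y)/(1-(d_1/b_1)y) y^{i-1} dy`,
with `y*(t) = (e^{λ_1 t}-1)/(e^{λ_1 t}-d_1/b_1)`. -/
theorem stmt_13 (b1 d1 t ω : ℝ) (hd : 0 ≤ d1) (hbd : d1 < b1) (ht : 0 < t) (hω : 0 ≤ ω)
    (lam1 : ℝ) (hlam1 : lam1 = b1 - d1) (i : ℕ) (hi : 1 ≤ i) :
    ∫ a in (0:ℝ)..t, ω * Real.exp (lam1 * (t - a)) * b1 *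
        (lam1 ^ 2 * Real.exp (-lam1 * a) / b1 ^ 2 *
          (1 - Real.exp (-lam1 * a)) ^ (i - 1) /
          (1 - d1 / b1 * Real.exp (-lam1 * a)) ^ (i + 1)) =
      ω * Real.exp (lam1 * t) *
        ∫ y in (0:ℝ)..((Real.exp (lam1 * t) - 1) / (Real.exp (lam1 * t) - d1 / b1)),
          (1 - y) / (1 - d1 / b1 * y) * y ^ (i - 1) := by
  obtain ⟨j, rfl⟩ : ∃ j, i = j + 1 := ⟨i - 1, (Nat.succ_pred_eq_of_pos hi).symm⟩
  simp only [Nat.add_sub_cancel]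
  have hb : 0 < b1 := lt_of_le_of_lt hd hbd
  set r : ℝ := d1 / b1 with hr
  have hr0 : 0 ≤ r := div_nonneg hd hb.le
  have hr1 : r < 1 := (div_lt_one hb).2 hbd
  have hlam : 0 < lam1 := by rw [hlam1]; linarith
  set f : ℝ → ℝ := fun a => (1 - Real.exp (-lam1 * a)) / (1 - r * Real.exp (-lam1 * a))
    with hf
  set f' : ℝ → ℝ := fun a =>
    lam1 * (1 - r) * Real.exp (-lam1 * a) / (1 - r * Real.exp (-lam1 * a)) ^ 2 with hf'
  set g : ℝ → ℝ := fun y => (1 - y) / (1 - r * y) * y ^ j with hg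
  -- basic facts on [0,t]
  have hden : ∀ a ∈ uIcc (0:ℝ) t, 0 < 1 - r * Real.exp (-lam1 * a) := by
    intro a ha
    rw [Set.uIcc_of_le ht.le] at ha
    have hEpos : 0 < Real.exp (-lam1 * a) := Real.exp_pos _
    have hE1 : Real.exp (-lam1 * a) ≤ 1 := by
      apply Real.exp_le_one_iff.2
      nlinarith [ha.1]
    nlinarith
  -- derivative
  have hderiv : ∀ a ∈ uIcc (0:ℝ) t, HasDerivAt f (f' a) a := by
    intro a ha
    have hEd : HasDerivAt (fun a : ℝ => Real.exp (-lam1 * a))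
        (-lam1 * Real.exp (-lam1 * a)) a := by
      have := (Real.hasDerivAt_exp (-lam1 * a)).comp a ((hasDerivAt_id a).const_mul (-lam1))
      simpa [Function.comp_def, mul_comm] using this
    have h1 : HasDerivAt (fun a : ℝ => 1 - Real.exp (-lam1 * a))
        (lam1 * Real.exp (-lam1 * a)) a := by
      simpa using hEd.const_sub 1
    have h2 : HasDerivAt (fun a : ℝ => 1 - r * Real.exp (-lam1 * a))
        (r * lam1 * Real.exp (-lam1 * a)) a := by
      have := ((hEd.const_mul r)).const_sub 1
      refine this.congr_deriv ?_; ring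
    have hne := (hden a ha).ne'
    have := h1.div h2 hne
    refine this.congr_deriv ?_
    simp only [hf']
    field_simp
    ring
  have hcont : ContinuousOn f' (uIcc (0:ℝ) t) := by
    apply ContinuousOn.div
    · fun_prop
    · fun_prop
    · intro a ha
      exact pow_ne_zero 2 (hden a ha).ne'
  have hgcont : ContinuousOn g (f '' uIcc (0:ℝ) t) := by
    apply ContinuousOn.mul
    · apply ContinuousOn.div (by fun_prop) (by fun_prop)
      rintro y ⟨a, ha, rfl⟩
      have h := hden a ha
      have heq : 1 - r * f a = (1 - r) / (1 - r * Real.exp (-lam1 * a)) :=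
        aux2 r _ h.ne'
      rw [heq]
      exact (div_pos (by linarith) h).ne'
    · fun_prop
  have key := integral_comp_smul_deriv' hderiv hcont hgcont
  have hf0 : f 0 = 0 := by simp [hf]
  have hft : f t = (Real.exp (lam1 * t) - 1) / (Real.exp (lam1 * t) - r) := by
    have hEinv : Real.exp (-lam1 * t) = (Real.exp (lam1 * t))⁻¹ := by
      rw [← Real.exp_neg]; congr 1; ring
    have hE1 : 1 < Real.exp (lam1 * t) := by
      simpa using Real.exp_lt_exp.2 (show (0:ℝ) < lam1 * t by positivity)
    have h1 : Real.exp (lam1 * t) - r ≠ 0 := by nlinarith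
    have h2 : (1:ℝ) - r * (Real.exp (lam1 * t))⁻¹ ≠ 0 := by
      have := hden t (by rw [Set.uIcc_of_le ht.le]; exact ⟨ht.le, le_refl t⟩)
      rw [hEinv] at this; linarith
    rw [hf]
    simp only [hEinv]
    rw [div_eq_div_iff h2 h1]
    have hEne : Real.exp (lam1 * t) ≠ 0 := (Real.exp_pos _).ne'
    field_simp
  rw [hf0, hft] at key
  rw [← key, ← intervalIntegral.integral_const_mul]
  apply intervalIntegral.integral_congr
  intro a ha
  have hEpos : (0:ℝ) < Real.exp (-lam1 * a) := Real.exp_pos _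
  have hda : 0 < 1 - r * Real.exp (-lam1 * a) := hden a ha
  set E := Real.exp (-lam1 * a) with hE
  set D := 1 - r * E with hD
  have hrr : (1:ℝ) - r ≠ 0 := by linarith
  simp only [smul_eq_mul, Function.comp]
  rw [hf', hg, hf]
  have hD' : D ≠ 0 := hda.ne'
  have e1 : 1 - (1 - E) / D = (1 - r) * E / D := by rw [hD]; exact aux1 r E (by rw [← hD]; exact hD')
  have e2 : 1 - r * ((1 - E) / D) = (1 - r) / D := by rw [hD]; exact aux2 r E (by rw [← hD]; exact hD')
  simp only
  rw [e1, e2]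
  have e3 : (1 - r) * E / D / ((1 - r) / D) = E := aux3 r E D hrr hD'
  rw [e3]
  have eexp : Real.exp (lam1 * (t - a)) = Real.exp (lam1 * t) * E := by
    rw [hE, ← Real.exp_add]; congr 1; ring
  rw [eexp, div_pow]
  exact auxfin j ω (Real.exp (lam1 * t)) b1 d1 lam1 E D hb.ne' hD' hlam1
end

section
/- Let λ_0, λ_1 > 0, b_1 > d_1 > 0 with λ_1 = b_1 - d_1, and fix i ∈ ℕ*, t > 0. Define I(i) = ∫_0^1 (1-y)/(1-(d_1/b_1)y) y^{i-1} dy, h_i(x) = ∫_0^{(x-1)/(x-d_1/b_1)} (1-y)/(1-(d_1/b_1)y) y^{i-1} dy, and for N ≥ 2 let t_N = t log N. Suppose x_N → λ_0/δ_0 with δ_0 > λ_0 > 0 (so x_N δ_0 → λ_0). Then ∫_0^{t_N} h_i(e^{λ_1(t_N-s)}) e^{-(λ_1+x_N δ_0)s} ds → I(i)/(λ_0+λ_1) as N → ∞. -/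
open Filter Topology MeasureTheory Set

/-- dominated-convergence step of Lemma 4.1: with
`h_i(x) = ∫_0^{(x-1)/(x-d_1/b_1)} (1-y)/(1-(d_1/b_1)y) y^{i-1} dy`,
`I(i) = ∫_0^1 (1-y)/(1-(d_1/b_1)y) y^{i-1} dy`, `t_N = t log N`, and
`x_N → λ_0/δ_0` (so `x_N δ_0 → λ_0`),
`∫_0^{t_N} h_i(e^{λ_1(t_N-s)}) e^{-(λ_1+x_N δ_0)s} ds → I(i)/(λ_0+λ_1)`. -/
theorem stmt_15 (lam0 lam1 b1 d1 del0 t : ℝ)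
    (hlam0 : 0 < lam0) (hlam1 : 0 < lam1) (hd : 0 < d1) (hbd : d1 < b1)
    (hlam1' : lam1 = b1 - d1) (hdel0 : lam0 < del0) (ht : 0 < t)
    (i : ℕ) (hi : 1 ≤ i)
    (xN : ℕ → ℝ) (hxN : Tendsto xN atTop (𝓝 (lam0 / del0)))
    (h : ℝ → ℝ)
    (hh : ∀ x : ℝ, h x = ∫ y in (0:ℝ)..((x - 1) / (x - d1 / b1)),
      (1 - y) / (1 - d1 / b1 * y) * y ^ (i - 1))
    (I : ℝ)
    (hI : I = ∫ y in (0:ℝ)..1, (1 - y) / (1 - d1 / b1 * y) * y ^ (i - 1)) :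
    Tendsto (fun N : ℕ =>
        ∫ s in (0:ℝ)..(t * Real.log N),
          h (Real.exp (lam1 * (t * Real.log N - s))) *
            Real.exp (-(lam1 + xN N * del0) * s))
      atTop (𝓝 (I / (lam0 + lam1))) := by
  have hb1 : 0 < b1 := hd.trans hbd
  set ρ : ℝ := d1 / b1 with hρdef
  have hρ0 : 0 < ρ := div_pos hd hb1
  have hρ1 : ρ < 1 := (div_lt_one hb1).mpr hbd
  set g : ℝ → ℝ := fun y => (1 - y) / (1 - ρ * y) * y ^ (i - 1) with hgdef
  set P : ℝ → ℝ := fun a => ∫ y in (0:ℝ)..a, g y with hPdef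
  have hhP : ∀ x : ℝ, h x = P ((x - 1) / (x - ρ)) := fun x => hh x
  have hIP : I = P 1 := hI
  -- basic properties of g
  have hg01 : ∀ y ∈ Icc (0:ℝ) 1, 0 ≤ g y ∧ g y ≤ 1 := by
    intro y hy
    obtain ⟨hy0, hy1⟩ := hy
    have hden : 0 < 1 - ρ * y := by nlinarith
    have hfr0 : 0 ≤ (1 - y) / (1 - ρ * y) := div_nonneg (by linarith) hden.le
    have hfr1 : (1 - y) / (1 - ρ * y) ≤ 1 := by
      rw [div_le_one hden]; nlinarith
    have hp0 : 0 ≤ y ^ (i - 1) := pow_nonneg hy0 _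
    have hp1 : y ^ (i - 1) ≤ 1 := pow_le_one₀ hy0 hy1
    exact ⟨mul_nonneg hfr0 hp0, mul_le_one₀ hfr1 hp0 hp1⟩
  have hgc : ContinuousOn g (Icc 0 1) := by
    apply ContinuousOn.mul
    · apply ContinuousOn.div (by fun_prop) (by fun_prop)
      intro y hy
      obtain ⟨hy0, hy1⟩ := hy
      nlinarith
    · fun_prop
  have hgint : IntegrableOn g (Icc 0 1) := hgc.integrableOn_Icc
  have hii : ∀ a ∈ Icc (0:ℝ) 1, ∀ b ∈ Icc (0:ℝ) 1, IntervalIntegrable g volume a b := by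
    intro a ha b hb
    apply IntegrableOn.intervalIntegrable
    apply hgint.mono_set
    have : uIcc a b ⊆ uIcc (0:ℝ) 1 := by
      apply uIcc_subset_uIcc <;> rwa [uIcc_of_le zero_le_one]
    rwa [uIcc_of_le zero_le_one] at this
  -- key estimates on the primitive P
  have key : ∀ a ∈ Icc (0:ℝ) 1, 0 ≤ P a ∧ P a ≤ I ∧ I - P a ≤ 1 - a := by
    intro a ha
    have h1 : IntervalIntegrable g volume 0 a :=
      hii 0 ⟨le_refl 0, zero_le_one⟩ a ha
    have h2 : IntervalIntegrable g volume a 1 :=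
      hii a ha 1 ⟨zero_le_one, le_refl 1⟩
    have hsplit : P a + ∫ y in a..(1:ℝ), g y = I := by
      rw [hIP]; exact intervalIntegral.integral_add_adjacent_intervals h1 h2
    have hnn1 : 0 ≤ P a :=
      intervalIntegral.integral_nonneg ha.1
        (fun y hy => (hg01 y ⟨hy.1, hy.2.trans ha.2⟩).1)
    have hnn2 : 0 ≤ ∫ y in a..(1:ℝ), g y :=
      intervalIntegral.integral_nonneg ha.2
        (fun y hy => (hg01 y ⟨ha.1.trans hy.1, hy.2⟩).1)
    have hub : (∫ y in a..(1:ℝ), g y) ≤ 1 - a := by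
      have hle : (∫ y in a..(1:ℝ), g y) ≤ ∫ _y in a..(1:ℝ), (1:ℝ) := by
        apply intervalIntegral.integral_mono_on ha.2 h2 intervalIntegrable_const
        intro y hy
        exact (hg01 y ⟨ha.1.trans hy.1, hy.2⟩).2
      simpa using hle
    exact ⟨hnn1, by linarith, by linarith⟩
  have hInn : 0 ≤ I := by
    have := key 1 ⟨zero_le_one, le_refl 1⟩
    rw [hIP]; exact this.1
  -- the fraction map
  have hA : ∀ x : ℝ, 1 ≤ x → (x - 1) / (x - ρ) ∈ Icc (0:ℝ) 1 := by
    intro x hx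
    have hden : 0 < x - ρ := by linarith
    exact ⟨div_nonneg (by linarith) hden.le, (div_le_one hden).mpr (by linarith)⟩
  have hA' : ∀ x : ℝ, 1 ≤ x → 1 - (x - 1) / (x - ρ) = (1 - ρ) / (x - ρ) := by
    intro x hx
    have hden : 0 < x - ρ := by linarith
    field_simp
    ring
  -- continuity of h on [1, ∞)
  have hPc : ContinuousOn P (Icc 0 1) := by
    have := intervalIntegral.continuousOn_primitive_interval
      (a := 0) (b := 1) (f := g) (μ := volume) (by rwa [uIcc_of_le zero_le_one])
    rwa [uIcc_of_le zero_le_one] at this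
  have hhc : ContinuousOn h (Ici 1) := by
    have hAc : ContinuousOn (fun x : ℝ => (x - 1) / (x - ρ)) (Ici 1) := by
      apply ContinuousOn.div (by fun_prop) (by fun_prop)
      intro x hx
      have : (1:ℝ) ≤ x := hx
      have : 0 < x - ρ := by linarith
      positivity
    have : ContinuousOn (P ∘ fun x : ℝ => (x - 1) / (x - ρ)) (Ici 1) :=
      hPc.comp hAc (fun x hx => hA x hx)
    exact this.congr (fun x hx => hhP x)
  -- limits of the parameters
  have hdel0' : (0:ℝ) < del0 := hlam0.trans hdel0
  have hc : Tendsto (fun N : ℕ => xN N * del0) atTop (𝓝 lam0) := by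
    have := hxN.mul_const del0
    rwa [div_mul_cancel₀ _ (ne_of_gt hdel0')] at this
  have hT : Tendsto (fun N : ℕ => t * Real.log N) atTop atTop := by
    apply Tendsto.const_mul_atTop ht
    exact Real.tendsto_log_atTop.comp tendsto_natCast_atTop_atTop
  -- the indicator form of the integrand
  set F : ℕ → ℝ → ℝ := fun N s =>
    (Ioc (0:ℝ) (t * Real.log N)).indicator
      (fun s => h (Real.exp (lam1 * (t * Real.log N - s))) *
        Real.exp (-(lam1 + xN N * del0) * s)) s with hFdef
  -- the bound
  have hb2 : (0:ℝ) < lam1 + lam0 / 2 := by linarith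
  have bound_int : Integrable (fun s : ℝ => I * Real.exp (-(lam1 + lam0 / 2) * s))
      (volume.restrict (Ioi (0:ℝ))) :=
    (exp_neg_integrableOn_Ioi 0 hb2).const_mul I
  -- measurability
  have hF_meas : ∀ N : ℕ, AEStronglyMeasurable (F N) (volume.restrict (Ioi (0:ℝ))) := by
    intro N
    rw [hFdef]
    simp only
    rw [aestronglyMeasurable_indicator_iff measurableSet_Ioc,
      Measure.restrict_restrict measurableSet_Ioc,
      inter_eq_left.mpr Ioc_subset_Ioi_self]
    apply ContinuousOn.aestronglyMeasurable ?_ measurableSet_Ioc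
    apply ContinuousOn.mul ?_ (by fun_prop)
    apply hhc.comp (by fun_prop)
    intro s hs
    have h0 : 0 ≤ lam1 * (t * Real.log N - s) := mul_nonneg hlam1.le (by linarith [hs.2])
    simpa using Real.one_le_exp h0
  -- pointwise bound on h at arguments ≥ 1
  have hbound_h : ∀ x : ℝ, 1 ≤ x → 0 ≤ h x ∧ h x ≤ I := by
    intro x hx
    rw [hhP x]
    have := key _ (hA x hx)
    exact ⟨this.1, this.2.1⟩
  -- the domination
  have h_bound : ∀ᶠ N : ℕ in atTop, ∀ᵐ s ∂(volume.restrict (Ioi (0:ℝ))),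
      ‖F N s‖ ≤ I * Real.exp (-(lam1 + lam0 / 2) * s) := by
    filter_upwards [hc.eventually (eventually_gt_nhds (by linarith : lam0 / 2 < lam0))]
      with N hcN
    apply Eventually.of_forall
    intro s
    rw [hFdef]
    simp only [indicator]
    split_ifs with hs
    · obtain ⟨hs0, hsT⟩ := hs
      have hx1 : (1:ℝ) ≤ Real.exp (lam1 * (t * Real.log N - s)) := by
        have h0 : 0 ≤ lam1 * (t * Real.log N - s) := mul_nonneg hlam1.le (by linarith)
        simpa using Real.one_le_exp h0
      obtain ⟨hh0, hhI⟩ := hbound_h _ hx1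
      have hee : Real.exp (-(lam1 + xN N * del0) * s) ≤
          Real.exp (-(lam1 + lam0 / 2) * s) := by
        apply Real.exp_le_exp.mpr
        nlinarith
      rw [Real.norm_eq_abs, abs_of_nonneg (mul_nonneg hh0 (Real.exp_nonneg _))]
      have := Real.exp_nonneg (-(lam1 + xN N * del0) * s)
      nlinarith
    · simp only [norm_zero]
      positivity
  -- pointwise convergence
  have h_lim : ∀ᵐ s ∂(volume.restrict (Ioi (0:ℝ))),
      Tendsto (fun N : ℕ => F N s) atTop (𝓝 (I * Real.exp (-(lam1 + lam0) * s))) := by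
    rw [ae_restrict_iff' measurableSet_Ioi]
    apply Eventually.of_forall
    intro s hs
    have hs0 : (0:ℝ) < s := hs
    -- the exponential factor converges
    have hexp : Tendsto (fun N : ℕ => Real.exp (-(lam1 + xN N * del0) * s)) atTop
        (𝓝 (Real.exp (-(lam1 + lam0) * s))) := by
      apply (Real.continuous_exp.tendsto _).comp
      exact ((hc.const_add lam1).neg).mul_const s
    -- exp (lam1 * (T N - s)) → ∞
    have hXinf : Tendsto (fun N : ℕ => Real.exp (lam1 * (t * Real.log N - s)))
        atTop atTop := by
      apply Real.tendsto_exp_atTop.comp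
      apply Tendsto.const_mul_atTop hlam1
      exact tendsto_atTop_add_const_right _ (-s) hT |>.congr (fun N => by ring)
    -- h (exp (lam1 * (T N - s))) → I
    have hhlim : Tendsto (fun N : ℕ => h (Real.exp (lam1 * (t * Real.log N - s))))
        atTop (𝓝 I) := by
      have hlower : Tendsto (fun N : ℕ =>
          I - (1 - ρ) / (Real.exp (lam1 * (t * Real.log N - s)) - ρ)) atTop (𝓝 I) := by
        have : Tendsto (fun N : ℕ =>
            (1 - ρ) / (Real.exp (lam1 * (t * Real.log N - s)) - ρ)) atTop (𝓝 0) :=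
          Tendsto.div_atTop tendsto_const_nhds
            (tendsto_atTop_add_const_right _ (-ρ) hXinf |>.congr (fun N => by ring))
        simpa using (tendsto_const_nhds (x := I)).sub this
      apply tendsto_of_tendsto_of_tendsto_of_le_of_le' hlower tendsto_const_nhds
      · filter_upwards [hXinf.eventually_ge_atTop 1] with N hX1
        set x := Real.exp (lam1 * (t * Real.log N - s))
        have hk := key _ (hA x hX1)
        have := hA' x hX1
        rw [hhP x]
        linarith [hk.2.2]
      · filter_upwards [hXinf.eventually_ge_atTop 1] with N hX1
        exact (hbound_h _ hX1).2
    have hmul := hhlim.mul hexp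
    apply hmul.congr'
    filter_upwards [hT.eventually_ge_atTop s] with N hTs
    rw [hFdef]
    simp only [indicator]
    rw [if_pos ⟨hs0, hTs⟩]
  -- dominated convergence
  have hmain : Tendsto (fun N : ℕ => ∫ s in Ioi (0:ℝ), F N s) atTop
      (𝓝 (∫ s in Ioi (0:ℝ), I * Real.exp (-(lam1 + lam0) * s))) :=
    tendsto_integral_filter_of_dominated_convergence _
      (Eventually.of_forall hF_meas) h_bound bound_int h_lim
  -- compute the limit integral
  have hval : (∫ s in Ioi (0:ℝ), I * Real.exp (-(lam1 + lam0) * s)) = I / (lam0 + lam1) := by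
    have hb : (0:ℝ) < lam1 + lam0 := by linarith
    have hint : ∫ s in Ioi (0:ℝ), Real.exp (-(lam1 + lam0) * s) = 1 / (lam1 + lam0) := by
      have hder : ∀ x ∈ Ici (0:ℝ),
          HasDerivAt (fun s : ℝ => -(1 / (lam1 + lam0)) * Real.exp (-(lam1 + lam0) * s))
            (Real.exp (-(lam1 + lam0) * x)) x := by
        intro x _
        have h1 : HasDerivAt (fun s : ℝ => -(lam1 + lam0) * s) (-(lam1 + lam0)) x := by
          simpa using (hasDerivAt_id x).const_mul (-(lam1 + lam0))
        have h2 := (Real.hasDerivAt_exp (-(lam1 + lam0) * x)).comp x h1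
        have h3 := h2.const_mul (-(1 / (lam1 + lam0)))
        refine h3.congr_deriv ?_
        have hne : lam1 + lam0 ≠ 0 := hb.ne'
        field_simp
      have htend : Tendsto (fun s : ℝ =>
          -(1 / (lam1 + lam0)) * Real.exp (-(lam1 + lam0) * s)) atTop (𝓝 0) := by
        have : Tendsto (fun s : ℝ => Real.exp (-(lam1 + lam0) * s)) atTop (𝓝 0) := by
          have := Real.tendsto_exp_neg_atTop_nhds_zero.comp
            (Tendsto.const_mul_atTop hb tendsto_id)
          apply this.congr
          intro x
          simp only [Function.comp_apply, id_eq]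
          congr 1
          ring
        simpa using this.const_mul (-(1 / (lam1 + lam0)))
      have := MeasureTheory.integral_Ioi_of_hasDerivAt_of_tendsto' hder
        (exp_neg_integrableOn_Ioi 0 hb) htend
      rw [this]
      simp
    rw [MeasureTheory.integral_const_mul, hint]
    rw [mul_one_div, add_comm lam1 lam0]
  rw [hval] at hmain
  -- identify the interval integral with the indicator integral
  apply Tendsto.congr' _ hmain
  filter_upwards [eventually_ge_atTop 1] with N hN
  have hT0 : 0 ≤ t * Real.log N :=
    mul_nonneg ht.le (Real.log_nonneg (by exact_mod_cast hN))
  rw [MeasureTheory.integral_indicator measurableSet_Ioc,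
    Measure.restrict_restrict measurableSet_Ioc,
    inter_eq_left.mpr Ioc_subset_Ioi_self,
    intervalIntegral.integral_of_le hT0]
end
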